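/- Let {W_i}_{i=1}^N be a tight fusion frame for ℝ^M with Σ_{ℓ=1}^N P_ℓ = A·I in which every subspace has dimension m, and let σ_x, σ_n > 0. If two distinct subspaces W_i and W_j are erased, the extra MSE of the no-erasure LMMSE estimator equals 2 α² (σ_x² + σ_n²) m + 2 α² σ_x² tr[P_i P_j] = 2 α² (σ_x² + σ_n²) m + 2 α² σ_x² (m − d_c(W_i,W_j)²), where α = σ_x²/(A σ_x² + σ_n²). In particular, for fixed m the extra MSE is a strictly decreasing function of the chordal distance d_c(W_i, W_j). -/

import Mathlib

/-!
The trace of a projection matrix is the dimension of its range, so `tr Pᵢ = tr Pⱼ = m`.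
Idempotence turns `(Pᵢ + Pⱼ)²` into `Pᵢ + Pⱼ + PᵢPⱼ + PⱼPᵢ`, whose trace is
`2m + 2 tr(PᵢPⱼ)`; likewise, as `Pᵢ - Pⱼ` is symmetric, `‖Pᵢ - Pⱼ‖_F² = tr (Pᵢ - Pⱼ)²`
`= 2m - 2 tr(PᵢPⱼ)`, i.e. `tr(PᵢPⱼ) = m - d_c²`.
-/

open Matrix BigOperators

/-- The Frobenius norm of a real square matrix. -/
noncomputable def frobeniusNorm {M : ℕ} (X : Matrix (Fin M) (Fin M) ℝ) : ℝ :=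
  Real.sqrt (Matrix.trace (Xᵀ * X))

/-- The chordal distance between two subspaces of `ℝ^M`, expressed in terms of their
orthogonal projection matrices: `d_c = (1/√2) ‖Q_V − Q_W‖_F`. -/
noncomputable def chordalDist {M : ℕ} (Q₁ Q₂ : Matrix (Fin M) (Fin M) ℝ) : ℝ :=
  (1 / Real.sqrt 2) * frobeniusNorm (Q₁ - Q₂)

namespace Matrix

theorem trace_eq_finrank_range_of_isIdempotentElem {n K : Type*} [Fintype n] [DecidableEq n]
    [Field K] {P : Matrix n n K} (hP : IsIdempotentElem P) :
    P.trace = Module.finrank K (LinearMap.range P.mulVecLin) := by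
  rw [← trace_toLin'_eq,
    (LinearMap.IsIdempotentElem.isProj_range P.toLin' (hP.map toLinAlgEquiv')).trace]
  rfl

section Idempotent

variable {n R : Type*} [Fintype n] [CommRing R] {P Q : Matrix n n R}

theorem trace_add_mul_add_of_isIdempotentElem (hP : IsIdempotentElem P)
    (hQ : IsIdempotentElem Q) :
    ((P + Q) * (P + Q)).trace = P.trace + Q.trace + 2 * (P * Q).trace := by
  rw [add_mul, mul_add, mul_add, hP.eq, hQ.eq]
  simp only [trace_add, trace_mul_comm Q P]
  ring

theorem trace_sub_mul_sub_of_isIdempotentElem (hP : IsIdempotentElem P)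
    (hQ : IsIdempotentElem Q) :
    ((P - Q) * (P - Q)).trace = P.trace + Q.trace - 2 * (P * Q).trace := by
  rw [sub_mul, mul_sub, mul_sub, hP.eq, hQ.eq]
  simp only [trace_sub, trace_mul_comm Q P]
  ring

theorem trace_two_erasure_of_isIdempotentElem (hP : IsIdempotentElem P)
    (hQ : IsIdempotentElem Q) (a b : R) :
    (a • ((P + Q) * (P + Q)) + b • (P + Q)).trace =
      (a + b) * (P.trace + Q.trace) + 2 * a * (P * Q).trace := by
  rw [trace_add, trace_smul, trace_smul, trace_add_mul_add_of_isIdempotentElem hP hQ, trace_add,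
    smul_eq_mul, smul_eq_mul]
  ring

end Idempotent

end Matrix

theorem frobeniusNorm_sq {M : ℕ} (X : Matrix (Fin M) (Fin M) ℝ) :
    frobeniusNorm X ^ 2 = (Xᵀ * X).trace :=
  Real.sq_sqrt (by simpa using (posSemidef_conjTranspose_mul_self X).trace_nonneg)

theorem chordalDist_sq_of_isSymm_of_isIdempotentElem {M : ℕ} {P Q : Matrix (Fin M) (Fin M) ℝ}
    (hPs : P.IsSymm) (hQs : Q.IsSymm) (hP : IsIdempotentElem P) (hQ : IsIdempotentElem Q) :
    chordalDist P Q ^ 2 = (P.trace + Q.trace) / 2 - (P * Q).trace := by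
  have hsymm : (P - Q)ᵀ = P - Q := by rw [transpose_sub, hPs.eq, hQs.eq]
  rw [chordalDist, mul_pow, frobeniusNorm_sq, hsymm, trace_sub_mul_sub_of_isIdempotentElem hP hQ,
    div_pow, one_pow, Real.sq_sqrt zero_le_two]
  ring

theorem strictAntiOn_add_mul_sub_sq {R : Type*} [CommRing R] [LinearOrder R] [IsStrictOrderedRing R]
    {a c m : R} (hc : 0 < c) :
    StrictAntiOn (fun d : R => a + c * (m - d ^ 2)) (Set.Ici 0) := by
  intro x hx y _ hxy
  dsimp only
  gcongr

theorem two_erasure_mse_general {M N : ℕ} (A : ℝ) (hA : 0 < A)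
    (σx σn : ℝ) (hσx : 0 < σx) (hσn : 0 < σn)
    (W : Fin N → Submodule ℝ (Fin M → ℝ))
    (P : Fin N → Matrix (Fin M) (Fin M) ℝ)
    (hP : ∀ i, (P i).IsSymm ∧ P i * P i = P i ∧
      LinearMap.range (P i).mulVecLin = W i)
    (m : ℕ) (hdim : ∀ i, Module.finrank ℝ (W i) = m)
    (i j : Fin N)
    (α : ℝ) (hα : α = σx ^ 2 / (A * σx ^ 2 + σn ^ 2)) :
    α ^ 2 * Matrix.trace
        (σx ^ 2 • ((P i + P j) * (P i + P j)) + σn ^ 2 • (P i + P j)) =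
      2 * α ^ 2 * (σx ^ 2 + σn ^ 2) * (m : ℝ) +
        2 * α ^ 2 * σx ^ 2 * Matrix.trace (P i * P j) ∧
    α ^ 2 * Matrix.trace
        (σx ^ 2 • ((P i + P j) * (P i + P j)) + σn ^ 2 • (P i + P j)) =
      2 * α ^ 2 * (σx ^ 2 + σn ^ 2) * (m : ℝ) +
        2 * α ^ 2 * σx ^ 2 * ((m : ℝ) - chordalDist (P i) (P j) ^ 2) ∧
    StrictAntiOn
      (fun d : ℝ => 2 * α ^ 2 * (σx ^ 2 + σn ^ 2) * (m : ℝ) +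
        2 * α ^ 2 * σx ^ 2 * ((m : ℝ) - d ^ 2))
      (Set.Ici 0) := by
  have htrace : ∀ k, (P k).trace = m := fun k => by
    rw [trace_eq_finrank_range_of_isIdempotentElem (hP k).2.1, (hP k).2.2, hdim k]
  have hmse : α ^ 2 * (σx ^ 2 • ((P i + P j) * (P i + P j)) + σn ^ 2 • (P i + P j)).trace =
      2 * α ^ 2 * (σx ^ 2 + σn ^ 2) * m + 2 * α ^ 2 * σx ^ 2 * (P i * P j).trace := by
    rw [trace_two_erasure_of_isIdempotentElem (hP i).2.1 (hP j).2.1, htrace i, htrace j]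
    ring
  refine ⟨hmse, ?_, ?_⟩
  · rw [hmse, chordalDist_sq_of_isSymm_of_isIdempotentElem (hP i).1 (hP j).1 (hP i).2.1 (hP j).2.1,
      htrace i, htrace j]
    ring
  · have hα0 : α ≠ 0 := by rw [hα]; positivity
    exact strictAntiOn_add_mul_sub_sq (by positivity)

/-- For a tight fusion frame `∑ₗ Pₗ = A • I` of `m`-dimensional
subspaces and `σₓ, σₙ > 0`: if two distinct subspaces `W i`, `W j` are erased, the extra
MSE of the no-erasure LMMSE estimator equals
`2α²(σₓ²+σₙ²)m + 2α²σₓ² tr[Pᵢ Pⱼ] = 2α²(σₓ²+σₙ²)m + 2α²σₓ²(m − d_c(Wᵢ,Wⱼ)²)`,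
with `α = σₓ²/(Aσₓ²+σₙ²)`; in particular, for fixed `m` the extra MSE is a strictly
decreasing function of the chordal distance. -/
theorem two_erasure_mse {M N : ℕ} (A : ℝ) (hA : 0 < A)
    (σx σn : ℝ) (hσx : 0 < σx) (hσn : 0 < σn)
    (W : Fin N → Submodule ℝ (Fin M → ℝ))
    (P : Fin N → Matrix (Fin M) (Fin M) ℝ)
    (hP : ∀ i, (P i).IsSymm ∧ P i * P i = P i ∧
      LinearMap.range (P i).mulVecLin = W i)
    (htight : ∑ ℓ, P ℓ = A • (1 : Matrix (Fin M) (Fin M) ℝ))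
    (m : ℕ) (hdim : ∀ i, Module.finrank ℝ (W i) = m)
    (i j : Fin N) (hij : i ≠ j)
    (α : ℝ) (hα : α = σx ^ 2 / (A * σx ^ 2 + σn ^ 2)) :
    α ^ 2 * Matrix.trace
        (σx ^ 2 • ((P i + P j) * (P i + P j)) + σn ^ 2 • (P i + P j)) =
      2 * α ^ 2 * (σx ^ 2 + σn ^ 2) * (m : ℝ) +
        2 * α ^ 2 * σx ^ 2 * Matrix.trace (P i * P j) ∧
    α ^ 2 * Matrix.trace
        (σx ^ 2 • ((P i + P j) * (P i + P j)) + σn ^ 2 • (P i + P j)) =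
      2 * α ^ 2 * (σx ^ 2 + σn ^ 2) * (m : ℝ) +
        2 * α ^ 2 * σx ^ 2 * ((m : ℝ) - chordalDist (P i) (P j) ^ 2) ∧
    StrictAntiOn
      (fun d : ℝ => 2 * α ^ 2 * (σx ^ 2 + σn ^ 2) * (m : ℝ) +
        2 * α ^ 2 * σx ^ 2 * ((m : ℝ) - d ^ 2))
      (Set.Ici 0) :=
  two_erasure_mse_general A hA σx σn hσx hσn W P hP m hdim i j α hα
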